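/- Let V_π be a Poisson spray on the Poisson manifold (M, π) with flow φ_t, and let ω = ∫₀¹ (φ_t)*(ω_can) dt, defined near the zero section. Then for every x ∈ M and all v, w ∈ T_{0_x}(T*M), written in components as (v̄, θ_v) and (w̄, θ_w), one has ω_{0_x}(v, w) = ⟨θ_w, v̄⟩ − ⟨θ_v, w̄⟩ + π(θ_v, θ_w). In particular ω is nondegenerate at every point of the zero section. -/

import Mathlib

/-!
Formalization framework for "On the existence of symplectic realizations"
(Crainic–Mărcuț).  We work on a chart: the Poisson manifold is an open set
`U ⊆ ℝⁿ` (with `Vec n := Fin n → ℝ`), its cotangent bundle is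
`T*U = U × ℝⁿ ⊆ Pt n := Vec n × Vec n`, with bundle projection `Prod.fst`.
A bivector field is given by its components `Pb x p q = π_{pq}(x)`, a classical
connection on `TM` by its Christoffel symbols `Γ x p q r = Γ_{pq}^r(x)`.
-/

noncomputable section
open Set

namespace PoissonPaper

abbrev Vec (n : ℕ) := Fin n → ℝ
abbrev Pt (n : ℕ) := Vec n × Vec n

variable {n : ℕ}

/-- Partial derivative `∂_l f (x)`. -/
def pd (l : Fin n) (f : Vec n → ℝ) (x : Vec n) : ℝ :=
  fderiv ℝ f x (Pi.single l 1)

/-- The bundle map `π♯ : T*M → TM`, `β(π♯ α) = π(α, β)`;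
in components `(π♯ ξ)_q = ∑_p π_{pq} ξ_p`. -/
def sharp (Pb : Vec n → Fin n → Fin n → ℝ) (x ξ : Vec n) : Vec n :=
  fun q => ∑ p, Pb x p q * ξ p

/-- The Jacobiator of the bivector `Pb` on the coordinate functions:
`{{x_j,x_k},x_i} + {{x_k,x_i},x_j} + {{x_i,x_j},x_k}`; `π` is Poisson iff it
vanishes. -/
def jacobiator (Pb : Vec n → Fin n → Fin n → ℝ) (x : Vec n) (i j k : Fin n) : ℝ :=
  ∑ l, (Pb x l i * pd l (fun y => Pb y j k) x
      + Pb x l j * pd l (fun y => Pb y k i) x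
      + Pb x l k * pd l (fun y => Pb y i j) x)

/-- Components of the Schouten bracket `[π, π]` (with the convention
`[π,π](df,dg,dh) = 2({f,{g,h}} + {g,{h,f}} + {h,{f,g}})`). -/
def schouten (Pb : Vec n → Fin n → Fin n → ℝ) (x : Vec n) (i j k : Fin n) : ℝ :=
  -(2 * jacobiator Pb x i j k)

/-- `Pb` is a smooth bivector field (an antisymmetric 2-tensor) on `U`. -/
def IsBivectorOn (U : Set (Vec n)) (Pb : Vec n → Fin n → Fin n → ℝ) : Prop :=
  (∀ p q, ContDiffOn ℝ (⊤ : ℕ∞) (fun x => Pb x p q) U) ∧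
  (∀ x ∈ U, ∀ p q, Pb x q p = - Pb x p q)

/-- `Pb` is a Poisson bivector on `U` : a bivector with `[π,π] = 0`
(the Jacobi identity). -/
def IsPoissonOn (U : Set (Vec n)) (Pb : Vec n → Fin n → Fin n → ℝ) : Prop :=
  IsBivectorOn U Pb ∧ ∀ x ∈ U, ∀ i j k, jacobiator Pb x i j k = 0

/-- A Poisson spray for `(U, π)`: a (smooth) vector field `V` on `T*U = U × ℝⁿ`
such that `(dp)_ξ(V_ξ) = π♯(ξ)` and `m_t^*(V) = t V` for all `t > 0`
(the latter written as `(dm_t)(t • V_ξ) = V(m_t ξ)`, where `m_t(x,y) = (x,t•y)`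
and `dm_t(v,θ) = (v, t•θ)`). -/
structure IsSpray (U : Set (Vec n)) (Pb : Vec n → Fin n → Fin n → ℝ)
    (V : Pt n → Pt n) : Prop where
  smooth : ContDiffOn ℝ (⊤ : ℕ∞) V (U ×ˢ (univ : Set (Vec n)))
  base : ∀ ξ : Pt n, ξ.1 ∈ U → (V ξ).1 = sharp Pb ξ.1 ξ.2
  homog : ∀ t : ℝ, 0 < t → ∀ ξ : Pt n, ξ.1 ∈ U →
    V (ξ.1, t • ξ.2) = (t • (V ξ).1, t • t • (V ξ).2)

/-- A local flow `φ` of the vector field `V` on `T*U = U × ℝⁿ ⊆ Pt n`, with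
open domain `D ⊆ ℝ × Pt n`. -/
structure IsLocalFlow (U : Set (Vec n)) (V : Pt n → Pt n)
    (D : Set (ℝ × Pt n)) (φ : ℝ → Pt n → Pt n) : Prop where
  isOpen_dom : IsOpen D
  mem_zero : ∀ ξ : Pt n, ξ.1 ∈ U → ((0 : ℝ), ξ) ∈ D
  init : ∀ ξ : Pt n, φ 0 ξ = ξ
  interval : ∀ (t : ℝ) (ξ : Pt n), (t, ξ) ∈ D → ∀ s ∈ uIcc (0:ℝ) t, (s, ξ) ∈ D
  invariant : ∀ (t : ℝ) (ξ : Pt n), (t, ξ) ∈ D → (φ t ξ).1 ∈ U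
  hasDeriv : ∀ (t : ℝ) (ξ : Pt n), (t, ξ) ∈ D →
    HasDerivAt (fun s => φ s ξ) (V (φ t ξ)) t
  group : ∀ (s t : ℝ) (ξ : Pt n), (t, ξ) ∈ D → (s, φ t ξ) ∈ D →
    (s + t, ξ) ∈ D ∧ φ s (φ t ξ) = φ (s + t) ξ

/-- The canonical symplectic form `ω_can = ∑ dx_i ∧ dy_i` of `T*ℝⁿ = ℝⁿ × ℝⁿ`
(constant coefficients): `ω_can(v, w) = ⟨θ_w, v̄⟩ - ⟨θ_v, w̄⟩`. -/
def omegaCan (v w : Pt n) : ℝ := ∑ i, (w.2 i * v.1 i - v.2 i * w.1 i)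

/-- The 2-form `ω := ∫₀¹ (φ_t)^* ω_can dt`. -/
def omegaInt (φ : ℝ → Pt n → Pt n) (ξ v w : Pt n) : ℝ :=
  ∫ t in (0:ℝ)..1, omegaCan (fderiv ℝ (φ t) ξ v) (fderiv ℝ (φ t) ξ w)

/-- Nondegeneracy of a 2-form at a point. -/
def Nondeg (ω : Pt n → Pt n → Pt n → ℝ) (ξ : Pt n) : Prop :=
  ∀ v : Pt n, (∀ w : Pt n, ω ξ v w = 0) → v = 0

/-- Closedness of a 2-form on `S` (`dω = 0`, expressed on constant vector
fields). -/
def ClosedOn (S : Set (Pt n)) (ω : Pt n → Pt n → Pt n → ℝ) : Prop :=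
  ∀ ξ ∈ S, ∀ u v w : Pt n,
    fderiv ℝ (fun η => ω η v w) ξ u - fderiv ℝ (fun η => ω η u w) ξ v
      + fderiv ℝ (fun η => ω η u v) ξ w = 0

/-- `ω` is a symplectic form on `S`: a smooth, bilinear, antisymmetric,
closed, nondegenerate 2-form. -/
def IsSymplecticOn (S : Set (Pt n)) (ω : Pt n → Pt n → Pt n → ℝ) : Prop :=
  (∀ ξ ∈ S, ∀ v w : Pt n, ω ξ w v = - ω ξ v w) ∧
  (∀ ξ ∈ S, ∀ (a b : ℝ) (v v' w : Pt n),
      ω ξ (a • v + b • v') w = a * ω ξ v w + b * ω ξ v' w) ∧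
  (∀ v w : Pt n, ContDiffOn ℝ (⊤ : ℕ∞) (fun ξ => ω ξ v w) S) ∧
  ClosedOn S ω ∧ (∀ ξ ∈ S, Nondeg ω ξ)

/-- The projection `p = Prod.fst : (S, ω) → (U, π)` is a Poisson map: for each
`ξ ∈ S` and `θ ∈ T*_{p(ξ)}M`, any `v` with `i_v ω = p^*θ` at `ξ` satisfies
`(dp)_ξ(v) = π♯(θ)`; i.e. the bivector inverse to `ω` pushes forward to `π`. -/
def FstIsPoissonMap (S : Set (Pt n)) (Pb : Vec n → Fin n → Fin n → ℝ)
    (ω : Pt n → Pt n → Pt n → ℝ) : Prop :=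
  ∀ ξ ∈ S, ∀ θ : Vec n, ∀ v : Pt n,
    (∀ w : Pt n, ω ξ v w = ∑ i, θ i * w.1 i) → v.1 = sharp Pb ξ.1 θ

/-- Lie bracket of vector fields on `ℝⁿ` (in components). -/
def lieVF (X Y : Vec n → Vec n) (x : Vec n) : Vec n :=
  fun q => ∑ p, (X x p * pd p (fun y => Y y q) x - Y x p * pd p (fun y => X y q) x)

/-- Lie derivative of a 1-form `β` along a vector field `X` (in components):
`(L_X β)_r = ∑_p (X_p ∂_p β_r + β_p ∂_r X_p)`. -/
def lieDer1 (X β : Vec n → Vec n) (x : Vec n) : Vec n :=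
  fun r => ∑ p, (X x p * pd p (fun y => β y r) x + β x p * pd r (fun y => X y p) x)

/-- The pairing `π(α, β)`. -/
def pbPair (Pb : Vec n → Fin n → Fin n → ℝ) (α β : Vec n → Vec n) (x : Vec n) : ℝ :=
  ∑ p, ∑ q, Pb x p q * α x p * β x q

/-- The Koszul bracket `[α, β]_π = L_{π♯α} β − L_{π♯β} α − d(π(α,β))` on
1-forms. -/
def koszul (Pb : Vec n → Fin n → Fin n → ℝ) (α β : Vec n → Vec n) (x : Vec n) :
    Vec n :=
  fun r => lieDer1 (fun y => sharp Pb y (α y)) β x r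
         - lieDer1 (fun y => sharp Pb y (β y)) α x r
         - pd r (pbPair Pb α β) x

/-- The Lie derivative `L_{π♯α}(f)` of a function along `π♯α`. -/
def LDer (Pb : Vec n → Fin n → Fin n → ℝ) (α : Vec n → Vec n) (f : Vec n → ℝ)
    (x : Vec n) : ℝ :=
  ∑ q, sharp Pb x (α x) q * pd q f x

/-- Classical covariant derivative of a 1-form `α` along a vector field `X`,
for the connection dual to the one on `TM` with Christoffel symbols `Γ`:
`(∇_X α)_q = ∑_p X_p ∂_p α_q − ∑_{p,r} Γ_{pq}^r X_p α_r`. -/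
def covD1 (Γ : Vec n → Fin n → Fin n → Fin n → ℝ) (X α : Vec n → Vec n)
    (x : Vec n) : Vec n :=
  fun q => (∑ p, X x p * pd p (fun y => α y q) x)
         - ∑ p, ∑ r, Γ x p q r * X x p * α x r

/-- The contravariant connection `∇̄` on `TM` induced by a classical connection:
`∇̄_α(V) = π♯(∇_V α) + [π♯α, V]`. -/
def nbarVF (Pb : Vec n → Fin n → Fin n → ℝ)
    (Γ : Vec n → Fin n → Fin n → Fin n → ℝ)
    (α X : Vec n → Vec n) (x : Vec n) : Vec n :=
  fun s => (∑ q, Pb x q s * covD1 Γ X α x q)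
         + lieVF (fun y => sharp Pb y (α y)) X x s

/-- The contravariant connection `∇̄` on `T*M` induced by a classical
connection: `∇̄_α(β) = ∇_{π♯β}(α) + [α, β]_π`. -/
def nbar1F (Pb : Vec n → Fin n → Fin n → ℝ)
    (Γ : Vec n → Fin n → Fin n → Fin n → ℝ)
    (α β : Vec n → Vec n) (x : Vec n) : Vec n :=
  fun r => covD1 Γ (fun y => sharp Pb y (β y)) α x r + koszul Pb α β x r

/-- Connection coefficients of `∇̄` on `TM`: `(∇̄_{dx_p} ∂_q)^r`. -/
def GbarTM (Pb : Vec n → Fin n → Fin n → ℝ)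
    (Γ : Vec n → Fin n → Fin n → Fin n → ℝ) (x : Vec n) (p q r : Fin n) : ℝ :=
  -(∑ s, Pb x s r * Γ x q s p) - pd q (fun y => Pb y p r) x

/-- Connection coefficients of `∇̄` on `T*M`: `(∇̄_{dx_p} dx_q)_r`. -/
def GbarT1 (Pb : Vec n → Fin n → Fin n → ℝ)
    (Γ : Vec n → Fin n → Fin n → Fin n → ℝ) (x : Vec n) (p q r : Fin n) : ℝ :=
  pd r (fun y => Pb y p q) x - ∑ s, Pb x q s * Γ x s r p

/-- Connection coefficients of the contravariant connection `∇_α := ∇_{π♯α}`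
on `T*M`: `(∇_{π♯ dx_p} dx_q)_r`. -/
def Gplain (Pb : Vec n → Fin n → Fin n → ℝ)
    (Γ : Vec n → Fin n → Fin n → Fin n → ℝ) (x : Vec n) (p q r : Fin n) : ℝ :=
  -(∑ s, Pb x p s * Γ x s r q)

/-- Derivative of a path `u` (of tangent or cotangent vectors) along a
cotangent path with covector components `a` over base path `γ`, for a
contravariant connection with coefficients `G` (so `(∇_a u)_r = u̇_r +
∑_{p,q} a_p u_q G_{pq}^r`). -/
def covAlong (G : Vec n → Fin n → Fin n → Fin n → ℝ) (a γ : ℝ → Vec n)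
    (u : ℝ → Vec n) (t : ℝ) : Vec n :=
  fun r => deriv (fun s => u s r) t + ∑ p, ∑ q, a t p * u t q * G (γ t) p q r

/-- Vertical component `θ_v = v − hor_ξ(v̄)` of a tangent vector
`v ∈ T_ξ(T*M)` with respect to the classical connection `Γ`. -/
def vert (Γ : Vec n → Fin n → Fin n → Fin n → ℝ) (ξ v : Pt n) : Vec n :=
  fun q => v.2 q - ∑ p, ∑ r, Γ ξ.1 p q r * v.1 p * ξ.2 r

/-- The horizontal subspace `H_ξ ⊆ T_ξ(T*M)` of the classical connection `Γ`. -/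
def Hor (Γ : Vec n → Fin n → Fin n → Fin n → ℝ) (ξ : Pt n) : Set (Pt n) :=
  {u : Pt n | ∀ q, u.2 q = ∑ p, ∑ r, Γ ξ.1 p q r * u.1 p * ξ.2 r}

/-- A contravariant connection on `T*M` over the Poisson manifold `(U, π)`:
a bilinear operation `(α, β) ↦ ∇_α β` on 1-forms, function-linear in `α` and
satisfying the Leibniz rule `∇_α(fβ) = f ∇_α β + L_{π♯α}(f) β`. -/
structure IsContraConn (U : Set (Vec n)) (Pb : Vec n → Fin n → Fin n → ℝ)
    (C : (Vec n → Vec n) → (Vec n → Vec n) → (Vec n → Vec n)) : Prop where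
  addLeft : ∀ (α α' β : Vec n → Vec n), ∀ x ∈ U,
    C (α + α') β x = C α β x + C α' β x
  addRight : ∀ (α β β' : Vec n → Vec n), ∀ x ∈ U,
    C α (β + β') x = C α β x + C α β' x
  smulLeft : ∀ f : Vec n → ℝ, ContDiffOn ℝ (⊤ : ℕ∞) f U →
    ∀ (α β : Vec n → Vec n), ∀ x ∈ U,
      C (fun y => f y • α y) β x = f x • C α β x
  leibniz : ∀ f : Vec n → ℝ, ContDiffOn ℝ (⊤ : ℕ∞) f U →
    ∀ (α β : Vec n → Vec n), ∀ x ∈ U,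
      C α (fun y => f y • β y) x = f x • C α β x + LDer Pb α f x • β x

/-- Christoffel symbols of a contravariant connection:
`∇_{dx_p}(dx_q) = ∑_r Γ_{pq}^r dx_r`. -/
def christ (C : (Vec n → Vec n) → (Vec n → Vec n) → (Vec n → Vec n))
    (x : Vec n) (p q r : Fin n) : ℝ :=
  C (fun _ => Pi.single p 1) (fun _ => Pi.single q 1) x r

/-- A smooth 1-form on `U` (in components). -/
def Smooth1F (U : Set (Vec n)) (α : Vec n → Vec n) : Prop :=
  ∀ q, ContDiffOn ℝ (⊤ : ℕ∞) (fun x => α x q) U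

/-- The pairing `g(α, β)` of a fiber metric on `T*M` with 1-forms. -/
def gPair (g : Vec n → Fin n → Fin n → ℝ) (α β : Vec n → Vec n) (x : Vec n) : ℝ :=
  ∑ p, ∑ q, g x p q * α x p * β x q

end PoissonPaper

/-!
The spray vanishes on the zero section, and homogeneity forces its linearization at `0_x` to be
`A (v̄, θ) = (π♯θ, 0)`, so `A² = 0`. A Grönwall argument shows that the derivative of the flow at
the equilibrium `0_x` is the linearized flow `exp (t A) = 1 + t A`. Hence `(φ_t)^* ω_can` at `0_x`
equals `ω_can + 2 t π(θ_v, θ_w)` by antisymmetry of `π`, and integrating over `t ∈ [0, 1]` gives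
the formula, which is visibly nondegenerate.
-/

open Filter Metric Topology

section FlowAtEquilibrium

variable {E : Type*} [NormedAddCommGroup E] [NormedSpace ℝ E]
  {V : E → E} {A : E →L[ℝ] E} {p : E} {φ : ℝ → E → E}

lemma ContinuousOn.le_of_bootstrap {g : ℝ → ℝ} {a b ρ r : ℝ} (hg : ContinuousOn g (Icc a b))
    (hρr : ρ < r) (h : ∀ T ∈ Icc a b, (∀ s ∈ Ico a T, g s < r) → g T ≤ ρ) :
    ∀ s ∈ Icc a b, g s ≤ ρ := by
  set C := Icc a b ∩ g ⁻¹' Ici r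
  have hC : C = ∅ := by
    by_contra hne
    have hbdd : BddBelow C := ⟨a, fun s hs => hs.1.1⟩
    have hT := (hg.preimage_isClosed_of_isClosed isClosed_Icc isClosed_Ici).csInf_mem
      (nonempty_iff_ne_empty.2 hne) hbdd
    have hbelow : ∀ s ∈ Ico a (sInf C), g s < r := fun s hs =>
      not_le.1 fun hrs => notMem_of_lt_csInf hs.2 hbdd
        ⟨⟨hs.1, hs.2.le.trans hT.1.2⟩, hrs⟩
    exact (h _ hT.1 hbelow).not_gt (hρr.trans_le hT.2)
  intro s hs
  refine h s hs fun τ hτ => not_le.1 fun hrτ => ?_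
  exact (eq_empty_iff_forall_notMem.1 hC) τ ⟨⟨hτ.1, hτ.2.le.trans hs.2⟩, hrτ⟩

lemma norm_sub_le_exp_mul_of_hasDerivAt {f : ℝ → E} {K r : ℝ}
    (hK : 0 ≤ K) (hV : ∀ y ∈ ball p r, ‖V y‖ ≤ K * ‖y - p‖)
    (hf : ∀ s ∈ Icc (0 : ℝ) 1, HasDerivAt f (V (f s)) s)
    (hr : Real.exp K * ‖f 0 - p‖ < r) :
    ∀ s ∈ Icc (0 : ℝ) 1, ‖f s - p‖ ≤ Real.exp K * ‖f 0 - p‖ := by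
  have hcont : ContinuousOn f (Icc 0 1) := fun s hs => (hf s hs).continuousAt.continuousWithinAt
  refine ((hcont.sub continuousOn_const).norm).le_of_bootstrap hr fun T hT hball => ?_
  have hgr := norm_le_gronwallBound_of_norm_deriv_right_le (f := fun s => f s - p)
    (f' := fun s => V (f s)) (δ := ‖f 0 - p‖) (ε := 0)
    ((hcont.mono (Icc_subset_Icc_right hT.2)).sub continuousOn_const)
    (fun s hs => ((hf s ⟨hs.1, hs.2.le.trans hT.2⟩).sub_const p).hasDerivWithinAt) le_rfl
    (fun s hs => by simpa using hV (f s) (mem_ball_iff_norm.2 (hball s hs))) T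
    ⟨hT.1, le_rfl⟩
  rw [gronwallBound_ε0, sub_zero, mul_comm] at hgr
  exact hgr.trans (by gcongr; nlinarith [hT.2])

lemma gronwallBound_zero_le_mul_exp {K ε t : ℝ} (hK : 1 ≤ K) (hε : 0 ≤ ε)
    (ht : t ∈ Icc (0 : ℝ) 1) : gronwallBound 0 K ε t ≤ ε * Real.exp K := by
  simp only [gronwallBound_of_K_ne_0 (show K ≠ 0 by positivity), zero_mul, zero_add]
  have hexp : Real.exp (K * t) - 1 ≤ Real.exp K := by
    have := Real.exp_le_exp.2 (show K * t ≤ K by nlinarith [ht.2])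
    linarith
  exact mul_le_mul (div_le_self hε hK) hexp
    (sub_nonneg.2 (Real.one_le_exp (by nlinarith [ht.1]))) hε

lemma HasFDerivAt.eventually_norm_le (hA : HasFDerivAt V A p) (hVp : V p = 0) :
    ∀ᶠ y in 𝓝 p, ‖V y‖ ≤ (‖A‖ + 1) * ‖y - p‖ := by
  filter_upwards [hA.isLittleO.def one_pos] with y hy
  rw [hVp, sub_zero, one_mul] at hy
  calc ‖V y‖ ≤ ‖A (y - p)‖ + ‖V y - A (y - p)‖ := norm_le_insert' _ _
    _ ≤ ‖A‖ * ‖y - p‖ + ‖y - p‖ := add_le_add (A.le_opNorm _) hy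
    _ = (‖A‖ + 1) * ‖y - p‖ := by ring

lemma norm_sub_add_smul_le_of_hasDerivAt (hA2 : ∀ v, A (A v) = 0) {f : ℝ → E}
    (hf : ∀ s ∈ Icc (0 : ℝ) 1, HasDerivAt f (V (f s)) s) {η : ℝ} (hη : 0 ≤ η)
    (hV : ∀ s ∈ Icc (0 : ℝ) 1, ‖V (f s) - A (f s - p)‖ ≤ η) {t : ℝ} (ht : t ∈ Icc (0 : ℝ) 1) :
    ‖f t - (f 0 + t • A (f 0 - p))‖ ≤ η * Real.exp (‖A‖ + 1) := by
  -- As `A² = 0`, the path `f 0 + s • A (f 0 - p)` solves the linearized equation `y' = A (y - p)`.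
  have hpath : ∀ s : ℝ, A (f 0 + s • A (f 0 - p) - p) = A (f 0 - p) := fun s => by
    rw [add_sub_right_comm, map_add, map_smul, hA2, smul_zero, add_zero]
  have hgr := norm_le_gronwallBound_of_norm_deriv_right_le
    (f := fun s => f s - (f 0 + s • A (f 0 - p))) (f' := fun s => V (f s) - A (f 0 - p))
    (δ := 0) (K := ‖A‖ + 1) (ε := η) (a := 0) (b := 1)
    (fun s hs => ((hf s hs).continuousAt.sub (by fun_prop)).continuousWithinAt)
    (fun s hs => by
      have hd : HasDerivAt (fun s => f s - (f 0 + s • A (f 0 - p))) (V (f s) - A (f 0 - p)) s := by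
        simpa only [one_smul] using (hf s ⟨hs.1, hs.2.le⟩).fun_sub
          (((hasDerivAt_id' s).smul_const (A (f 0 - p))).const_add (f 0))
      exact hd.hasDerivWithinAt)
    (by simp) (fun s hs => by
      have hsplit : V (f s) - A (f 0 - p)
          = (V (f s) - A (f s - p)) + A (f s - (f 0 + s • A (f 0 - p))) := by
        conv_lhs => rw [← hpath s]
        simp only [map_sub]
        abel
      rw [hsplit, add_comm _ η]
      refine (norm_add_le _ _).trans (add_le_add (hV s ⟨hs.1, hs.2.le⟩) ?_)
      exact (A.le_opNorm _).trans (by gcongr; linarith)) t ht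
  rw [sub_zero] at hgr
  exact hgr.trans (gronwallBound_zero_le_mul_exp (le_add_of_nonneg_left (norm_nonneg A)) hη ht)

lemma eventually_norm_flow_sub_linear_le (hVp : V p = 0) (hA : HasFDerivAt V A p)
    (hA2 : ∀ v, A (A v) = 0) (hφ0 : ∀ ξ, φ 0 ξ = ξ)
    (hφ : ∀ᶠ ξ in 𝓝 p, ∀ s ∈ Icc (0 : ℝ) 1, HasDerivAt (fun τ => φ τ ξ) (V (φ s ξ)) s)
    {c : ℝ} (hc : 0 < c) :
    ∀ᶠ ξ in 𝓝 p, ∀ t ∈ Icc (0 : ℝ) 1, ‖φ t ξ - (ξ + t • A (ξ - p))‖ ≤ c * ‖ξ - p‖ := by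
  set K := ‖A‖ + 1
  have hK : 1 ≤ K := le_add_of_nonneg_left (norm_nonneg A)
  set ε := c / (Real.exp K * Real.exp K) with hεc
  have hε : 0 < ε := by positivity
  have hlin : ∀ᶠ y in 𝓝 p, ‖V y - A (y - p)‖ ≤ ε * ‖y - p‖ := by
    simpa [hVp] using hA.isLittleO.def hε
  obtain ⟨r, hr, hball⟩ :=
    Metric.eventually_nhds_iff_ball.1 (hlin.and (hA.eventually_norm_le hVp))
  filter_upwards [hφ, ball_mem_nhds p (div_pos hr (Real.exp_pos K))] with ξ hξ hξr
  rw [mem_ball_iff_norm, lt_div_iff₀ (Real.exp_pos K), mul_comm] at hξr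
  have hnear : ∀ s ∈ Icc (0 : ℝ) 1, ‖φ s ξ - p‖ ≤ Real.exp K * ‖ξ - p‖ := by
    simpa [hφ0] using norm_sub_le_exp_mul_of_hasDerivAt (by linarith) (fun y hy => (hball y hy).2)
      hξ (by simpa [hφ0] using hξr)
  intro t ht
  have hlinear := norm_sub_add_smul_le_of_hasDerivAt hA2 hξ (η := ε * (Real.exp K * ‖ξ - p‖))
    (by positivity) (fun s hs => (hball _ (mem_ball_iff_norm.2 ((hnear s hs).trans_lt hξr))).1.trans
      (by gcongr; exact hnear s hs)) ht
  rw [hφ0] at hlinear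
  calc _ ≤ ε * (Real.exp K * ‖ξ - p‖) * Real.exp K := hlinear
    _ = c * ‖ξ - p‖ := by rw [hεc]; field_simp

lemma hasFDerivAt_flow_of_sq_eq_zero (hVp : V p = 0) (hA : HasFDerivAt V A p)
    (hA2 : ∀ v, A (A v) = 0) (hφ0 : ∀ ξ, φ 0 ξ = ξ)
    (hφ : ∀ᶠ ξ in 𝓝 p, ∀ s ∈ Icc (0 : ℝ) 1, HasDerivAt (fun τ => φ τ ξ) (V (φ s ξ)) s)
    {t : ℝ} (ht : t ∈ Icc (0 : ℝ) 1) :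
    HasFDerivAt (φ t) (ContinuousLinearMap.id ℝ E + t • A) p := by
  have hlin {c : ℝ} (hc : 0 < c) := eventually_norm_flow_sub_linear_le hVp hA hA2 hφ0 hφ hc
  have hfix : φ t p = p := by
    simpa [sub_eq_zero] using (hlin one_pos).self_of_nhds t ht
  rw [hasFDerivAt_iff_isLittleO, Asymptotics.isLittleO_iff]
  intro c hc
  filter_upwards [hlin hc] with ξ hξ
  have hrem : φ t ξ - φ t p - (ContinuousLinearMap.id ℝ E + t • A) (ξ - p)
      = φ t ξ - (ξ + t • A (ξ - p)) := by
    rw [hfix]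
    simp only [add_apply, ContinuousLinearMap.id_apply, smul_apply]
    abel
  rw [hrem]
  exact hξ t ht

end FlowAtEquilibrium

namespace PoissonPaper

variable {n : ℕ}

@[simp] lemma sharp_zero (Pb : Vec n → Fin n → Fin n → ℝ) (x : Vec n) : sharp Pb x 0 = 0 := by
  ext; simp [sharp]

namespace IsSpray

variable {U : Set (Vec n)} {Pb : Vec n → Fin n → Fin n → ℝ} {V : Pt n → Pt n}

lemma apply_zero_section (hV : IsSpray U Pb V) {x : Vec n} (hx : x ∈ U) :
    V (x, 0) = 0 := by
  have hbase : (V (x, 0)).1 = 0 := by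
    simpa using hV.base (x, 0) hx
  have hfib : (V (x, 0)).2 = (2 * 2 : ℝ) • (V (x, 0)).2 := by
    simpa [smul_smul] using congrArg Prod.snd (hV.homog 2 two_pos (x, 0) hx)
  ext1
  · exact hbase
  · have h3 : (3 : ℝ) • (V (x, 0)).2 = 0 := by
      rw [show (3 : ℝ) = 2 * 2 - 1 by norm_num, sub_smul, one_smul, ← hfib, sub_self]
    exact (smul_eq_zero.1 h3).resolve_left three_ne_zero

lemma differentiableAt (hU : IsOpen U) (hV : IsSpray U Pb V) {ξ : Pt n} (hξ : ξ.1 ∈ U) :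
    DifferentiableAt ℝ V ξ :=
  (hV.smooth.contDiffAt ((hU.prod isOpen_univ).mem_nhds ⟨hξ, trivial⟩)).differentiableAt
    (by simp)

lemma fderiv_zero_section_apply (hU : IsOpen U) (hV : IsSpray U Pb V) {x : Vec n} (hx : x ∈ U)
    (u : Pt n) : fderiv ℝ V (x, 0) u = (sharp Pb x u.2, 0) := by
  have hline : HasDerivAt (fun s : ℝ => V ((x, 0) + s • u)) (fderiv ℝ V (x, 0) u) 0 := by
    refine (hV.differentiableAt hU (ξ := (x, 0)) hx).hasFDerivAt.comp_hasDerivAt_of_eq 0 ?_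
      (by simp)
    simpa using ((hasDerivAt_id' (0 : ℝ)).smul_const u).const_add ((x, 0) : Pt n)
  -- Homogeneity moves the difference quotient along `u` to the fixed fibre point `u.2`.
  have hquot : ∀ᶠ s in 𝓝[>] (0 : ℝ),
      s⁻¹ • (V ((x, 0) + (0 + s) • u) - V ((x, 0) + (0 : ℝ) • u))
        = ((V (x + s • u.1, u.2)).1, s • (V (x + s • u.1, u.2)).2) := by
    have hU' : ∀ᶠ s : ℝ in 𝓝 0, x + s • u.1 ∈ U :=
      (show Continuous fun s : ℝ => x + s • u.1 by fun_prop).continuousAt.eventually_mem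
        (by simpa using hU.mem_nhds hx)
    filter_upwards [nhdsWithin_le_nhds hU', self_mem_nhdsWithin] with s hsU (hs : 0 < s)
    have hpt : ((x, 0) : Pt n) + (0 + s) • u = (x + s • u.1, s • u.2) := by ext <;> simp
    rw [hpt, zero_smul, add_zero, hV.apply_zero_section hx, sub_zero,
      hV.homog s hs (x + s • u.1, u.2) hsU]
    simp [smul_smul, hs.ne']
  have hlim : Tendsto (fun s : ℝ => ((V (x + s • u.1, u.2)).1, s • (V (x + s • u.1, u.2)).2))
      (𝓝[>] 0) (𝓝 (sharp Pb x u.2, 0)) := by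
    have hc : Tendsto (fun s : ℝ => V (x + s • u.1, u.2)) (𝓝 0) (𝓝 (V (x, u.2))) :=
      (hV.differentiableAt hU (ξ := (x, u.2)) hx).continuousAt.tendsto.comp (by
        simpa using (show Continuous fun s : ℝ => ((x + s • u.1, u.2) : Pt n) by
          fun_prop).tendsto 0)
    rw [← hV.base (x, u.2) hx, ← zero_smul ℝ (V (x, u.2)).2]
    refine (Tendsto.prodMk_nhds ?_ ?_).mono_left nhdsWithin_le_nhds
    · exact (continuous_fst.tendsto _).comp hc
    · exact tendsto_id.smul ((continuous_snd.tendsto _).comp hc)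
  exact tendsto_nhds_unique (hline.tendsto_slope_zero_right.congr' hquot) hlim

end IsSpray

lemma sum_mul_sharp (Pb : Vec n → Fin n → Fin n → ℝ) (x θ η : Vec n) :
    ∑ i, η i * sharp Pb x θ i = ∑ p, ∑ q, Pb x p q * θ p * η q := by
  simp only [sharp, Finset.mul_sum]
  rw [Finset.sum_comm]
  exact Finset.sum_congr rfl fun p _ => Finset.sum_congr rfl fun q _ => by ring

lemma omegaCan_add_smul_sharp {Pb : Vec n → Fin n → Fin n → ℝ} {x : Vec n}
    (hanti : ∀ p q, Pb x q p = -Pb x p q) (t : ℝ) (v w : Pt n) :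
    omegaCan (v + t • (sharp Pb x v.2, 0)) (w + t • (sharp Pb x w.2, 0))
      = omegaCan v w + 2 * t * ∑ p, ∑ q, Pb x p q * v.2 p * w.2 q := by
  have hswap : ∑ i, v.2 i * sharp Pb x w.2 i = -∑ p, ∑ q, Pb x p q * v.2 p * w.2 q := by
    rw [sum_mul_sharp, Finset.sum_comm, ← Finset.sum_neg_distrib]
    refine Finset.sum_congr rfl fun p _ => ?_
    rw [← Finset.sum_neg_distrib]
    exact Finset.sum_congr rfl fun q _ => by rw [hanti]; ring
  have hcross : ∑ i, (w.2 i * sharp Pb x v.2 i - v.2 i * sharp Pb x w.2 i)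
      = 2 * ∑ p, ∑ q, Pb x p q * v.2 p * w.2 q := by
    rw [Finset.sum_sub_distrib, sum_mul_sharp, hswap]
    ring
  calc omegaCan (v + t • (sharp Pb x v.2, 0)) (w + t • (sharp Pb x w.2, 0))
      = ∑ i, ((w.2 i * v.1 i - v.2 i * w.1 i)
          + t * (w.2 i * sharp Pb x v.2 i - v.2 i * sharp Pb x w.2 i)) := by
        simp only [omegaCan, Prod.fst_add, Prod.snd_add, Prod.smul_mk, smul_zero, add_zero,
          Pi.add_apply, Pi.smul_apply, Pi.zero_apply, smul_eq_mul]
        exact Finset.sum_congr rfl fun i _ => by ring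
    _ = _ := by rw [Finset.sum_add_distrib, ← Finset.mul_sum, hcross, omegaCan]; ring

lemma integral_add_two_mul_id (a b : ℝ) : ∫ t in (0 : ℝ)..1, (a + 2 * t * b) = a + b := by
  rw [intervalIntegral.integral_add intervalIntegrable_const
      (Continuous.intervalIntegrable (by fun_prop) _ _),
    intervalIntegral.integral_mul_const, intervalIntegral.integral_const_mul, integral_id]
  norm_num

lemma eq_zero_of_forall_omegaCan_add_eq_zero (P : Fin n → Fin n → ℝ) {v : Pt n}
    (h : ∀ w : Pt n, omegaCan v w + ∑ p, ∑ q, P p q * v.2 p * w.2 q = 0) : v = 0 := by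
  have hfib : v.2 = 0 := funext fun q => by
    simpa [omegaCan, Pi.single_apply] using h (Pi.single q 1, 0)
  refine Prod.ext (funext fun i => ?_) hfib
  simpa [omegaCan, hfib, Pi.single_apply] using h (0, Pi.single i 1)

/-- At points `0_x` of the zero section, with respect to the canonical
identification `T_{0_x}(T*M) ≅ T_x M ⊕ T*_x M`, `v ↦ (v̄, θ_v)`, the 2-form
`ω = ∫₀¹ (φ_t)^* ω_can dt` is given by
`ω_{0_x}(v, w) = ⟨θ_w, v̄⟩ − ⟨θ_v, w̄⟩ + π(θ_v, θ_w)`;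
in particular `ω` is nondegenerate at every point of the zero section. -/
theorem omega_at_zero_section
    {n : ℕ} (U : Set (Vec n)) (hU : IsOpen U)
    (Pb : Vec n → Fin n → Fin n → ℝ) (hPb : IsPoissonOn U Pb)
    (V : Pt n → Pt n) (hV : IsSpray U Pb V)
    (D : Set (ℝ × Pt n)) (φ : ℝ → Pt n → Pt n) (hφ : IsLocalFlow U V D φ)
    (x : Vec n) (hx : x ∈ U)
    -- the flow is defined for `t ∈ [0,1]` on a neighborhood `W` of `0_x`
    (W : Set (Pt n)) (hWopen : IsOpen W) (hxW : ((x, (0 : Vec n)) : Pt n) ∈ W)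
    (hWD : ∀ η ∈ W, ∀ s ∈ Icc (0:ℝ) 1, (s, η) ∈ D) :
    (∀ v w : Pt n,
      omegaInt φ ((x, (0 : Vec n)) : Pt n) v w
        = (∑ i, (w.2 i * v.1 i - v.2 i * w.1 i))
          + ∑ p, ∑ q, Pb x p q * v.2 p * w.2 q) ∧
    Nondeg (omegaInt φ) ((x, (0 : Vec n)) : Pt n) := by
  have hDV := hV.fderiv_zero_section_apply hU hx
  have hDV_sq : ∀ v, fderiv ℝ V (x, 0) (fderiv ℝ V (x, 0) v) = 0 := by simp [hDV]
  have htraj : ∀ᶠ ξ in 𝓝 ((x, 0) : Pt n), ∀ s ∈ Icc (0 : ℝ) 1,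
      HasDerivAt (fun τ => φ τ ξ) (V (φ s ξ)) s :=
    Filter.mem_of_superset (hWopen.mem_nhds hxW) fun ξ hξ s hs => hφ.hasDeriv s ξ (hWD ξ hξ s hs)
  have hDφ : ∀ t ∈ Icc (0 : ℝ) 1, ∀ v, fderiv ℝ (φ t) (x, 0) v = v + t • (sharp Pb x v.2, 0) := by
    intro t ht v
    rw [(hasFDerivAt_flow_of_sq_eq_zero (hV.apply_zero_section hx)
      (hV.differentiableAt hU (ξ := (x, 0)) hx).hasFDerivAt hDV_sq hφ.init htraj ht).fderiv]
    simp [hDV]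
  have hformula : ∀ v w : Pt n, omegaInt φ (x, 0) v w
      = omegaCan v w + ∑ p, ∑ q, Pb x p q * v.2 p * w.2 q := by
    intro v w
    have hlinear : EqOn (fun t => omegaCan (fderiv ℝ (φ t) (x, 0) v) (fderiv ℝ (φ t) (x, 0) w))
        (fun t => omegaCan v w + 2 * t * ∑ p, ∑ q, Pb x p q * v.2 p * w.2 q) (uIcc 0 1) :=
      fun t ht => by
        rw [uIcc_of_le zero_le_one] at ht
        simp only [hDφ t ht, omegaCan_add_smul_sharp (hPb.1.2 x hx)]
    rw [omegaInt, intervalIntegral.integral_congr hlinear, integral_add_two_mul_id]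
  exact ⟨hformula, fun v hv =>
    eq_zero_of_forall_omegaCan_add_eq_zero (Pb x) fun w => (hformula v w).symm.trans (hv w)⟩

end PoissonPaper
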